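/- Let S be a bounded adapted process with S_t ∈ L^1 for all t, let π = {0 = t_0 < t_1 < … < t_n = 1} be a partition of [0,1], let ρ be a stopping time, and define ρ+ := inf{t ∈ π : t ≥ ρ} (with inf ∅ interpreted suitably). Then Var(S^{ρ+}, π) = E Σ_{t_i ∈ π} 1_{{t_i < ρ}} |E[S_{t_{i+1}} − S_{t_i} | F_{t_i}]|, where S^{ρ+} is the process S stopped at ρ+. -/

import Mathlib

/-! On `{t_i < ρ}` the time `ρ+` is at least `t_{i+1}`, so the stopped process has the same
increment over `[t_i, t_{i+1}]` as `S`; on `{ρ ≤ t_i}` also `ρ+ ≤ t_i`, and the stopped increment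
vanishes. Since `{t_i < ρ} ∈ ℱ_{t_i}`, its indicator comes out of the conditional expectation
given `ℱ_{t_i}`. -/

open MeasureTheory Set Filter Topology

noncomputable section

namespace BD

variable {Ω : Type*} {m0 : MeasurableSpace Ω}

/-- The filtration is right-continuous. -/
def RightContinuousFiltration (ℱ : Filtration ℝ m0) : Prop :=
  ∀ t : ℝ, ℱ t = ⨅ s ∈ Set.Ioi t, ℱ s

/-- `ℱ 0` contains all `P`-null sets. -/
def CompleteFiltration (ℱ : Filtration ℝ m0) (P : Measure Ω) : Prop :=
  ∀ s : Set Ω, P s = 0 → MeasurableSet[ℱ 0] s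

/-- The usual conditions: right continuity and completeness. -/
def UsualConditions (ℱ : Filtration ℝ m0) (P : Measure Ω) : Prop :=
  RightContinuousFiltration ℱ ∧ CompleteFiltration ℱ P

/-- A real function is càdlàg on the time interval `[0,1]`: it is right-continuous on `[0,1)`
and has left limits on `(0,1]`. -/
def IsCadlagFun (f : ℝ → ℝ) : Prop :=
  (∀ t ∈ Set.Ico (0:ℝ) 1, ContinuousWithinAt f (Set.Ici t) t) ∧
  (∀ t ∈ Set.Ioc (0:ℝ) 1, ∃ l : ℝ, Tendsto f (nhdsWithin t (Set.Iio t)) (nhds l))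

/-- A process is càdlàg if all its paths are càdlàg on `[0,1]`. -/
def Cadlag (S : ℝ → Ω → ℝ) : Prop := ∀ ω, IsCadlagFun fun t => S t ω

/-- The process is adapted on the time interval `[0,1]`. -/
def AdaptedOn (ℱ : Filtration ℝ m0) (S : ℝ → Ω → ℝ) : Prop :=
  ∀ t ∈ Set.Icc (0:ℝ) 1, StronglyMeasurable[ℱ t] (S t)

/-- A `[0,1] ∪ {∞}`-valued random time (modelled as a `WithTop ℝ`-valued map) is a stopping
time if `{ρ ≤ t} ∈ ℱ t` for every `t`. -/
def IsStoppingTimeTop (ℱ : Filtration ℝ m0) (ρ : Ω → WithTop ℝ) : Prop :=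
  ∀ t : ℝ, MeasurableSet[ℱ t] {ω | ρ ω ≤ (t : WithTop ℝ)}

/-- The random time takes values in `[0,1] ∪ {∞}`. -/
def ValuedInUnitOrTop (ρ : Ω → WithTop ℝ) : Prop :=
  ∀ ω, ρ ω = ⊤ ∨ ∃ t ∈ Set.Icc (0:ℝ) 1, ρ ω = (t : WithTop ℝ)

/-- The process `S` stopped at the (possibly infinite) random time `ρ`. -/
def stopped (S : ℝ → Ω → ℝ) (ρ : Ω → WithTop ℝ) : ℝ → Ω → ℝ :=
  fun t ω => S ((min (t : WithTop ℝ) (ρ ω)).untopD t) ω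

/-- A real-valued stopping time, with the meaning `IsStoppingTime` had in the older Mathlib. -/
def IsStoppingTimeReal (ℱ : Filtration ℝ m0) (τ : Ω → ℝ) : Prop :=
  ∀ i : ℝ, MeasurableSet[ℱ i] {ω | τ ω ≤ i}

/-- The σ-algebra of a stopping time, as `IsStoppingTime.measurableSpace` was in the older Mathlib. -/
protected def IsStoppingTimeReal.measurableSpace {ℱ : Filtration ℝ m0} {τ : Ω → ℝ}
    (hτ : IsStoppingTimeReal ℱ τ) : MeasurableSpace Ω where
  MeasurableSet' s := ∀ i : ℝ, MeasurableSet[ℱ i] (s ∩ {ω | τ ω ≤ i})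
  measurableSet_empty i := (Set.empty_inter {ω | τ ω ≤ i}).symm ▸ @MeasurableSet.empty _ (ℱ i)
  measurableSet_compl s hs i := by
    rw [(_ : sᶜ ∩ {ω | τ ω ≤ i} = (sᶜ ∪ {ω | τ ω ≤ i}ᶜ) ∩ {ω | τ ω ≤ i})]
    · refine MeasurableSet.inter ?_ ?_
      · rw [← Set.compl_inter]
        exact (hs i).compl
      · exact hτ i
    · rw [Set.union_inter_distrib_right]
      simp only [Set.compl_inter_self, Set.union_empty]
  measurableSet_iUnion s hs i := by
    rw [forall_comm] at hs
    rw [Set.iUnion_inter]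
    exact @MeasurableSet.iUnion _ _ (ℱ i) _ _ (hs i)

/-- A simple integrand `H = ∑_{i=1}^k H^i 1_{(τ_i, τ_{i+1}]}` where the `τ_i` are `[0,1]`-valued
stopping times, increasing in `i`, and `H^i` is bounded and `ℱ_{τ_i}`-measurable. -/
structure SimpleIntegrand (ℱ : Filtration ℝ m0) where
  k : ℕ
  τ : Fin (k + 1) → Ω → ℝ
  τ_mono : ∀ ω, Monotone fun i => τ i ω
  τ_mem : ∀ i ω, τ i ω ∈ Set.Icc (0:ℝ) 1
  τ_stopping : ∀ i, IsStoppingTimeReal ℱ (τ i)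
  H : Fin k → Ω → ℝ
  H_bdd : ∀ i, ∃ C : ℝ, ∀ ω, |H i ω| ≤ C
  H_meas : ∀ i : Fin k,
    StronglyMeasurable[(τ_stopping i.castSucc).measurableSpace] (H i)

/-- The value of a simple integrand at time `t`. -/
def SimpleIntegrand.val {ℱ : Filtration ℝ m0} (Hs : SimpleIntegrand ℱ) (t : ℝ) (ω : Ω) : ℝ :=
  ∑ i : Fin Hs.k, if Hs.τ i.castSucc ω < t ∧ t ≤ Hs.τ i.succ ω then Hs.H i ω else 0

/-- `c` is a uniform (sup-norm) bound for the simple integrand. -/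
def SimpleIntegrand.BddBy {ℱ : Filtration ℝ m0} (Hs : SimpleIntegrand ℱ) (c : ℝ) : Prop :=
  ∀ t ω, |Hs.val t ω| ≤ c

/-- The elementary stochastic integral `I_S(H) = ∑ H^i (S_{τ_{i+1}} - S_{τ_i})`. -/
def elemIntegral {ℱ : Filtration ℝ m0} (S : ℝ → Ω → ℝ) (Hs : SimpleIntegrand ℱ) (ω : Ω) : ℝ :=
  ∑ i : Fin Hs.k, Hs.H i ω * (S (Hs.τ i.succ ω) ω - S (Hs.τ i.castSucc ω) ω)

/-- `S` is a good integrator: `I_S` is continuous from the simple integrands (with the sup norm)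
to `L⁰(P)`, i.e. `‖Hⁿ‖_∞ → 0` implies `I_S(Hⁿ) → 0` in probability. -/
def GoodIntegrator (ℱ : Filtration ℝ m0) (P : Measure Ω) (S : ℝ → Ω → ℝ) : Prop :=
  ∀ (Hs : ℕ → SimpleIntegrand ℱ) (c : ℕ → ℝ),
    (∀ n, (Hs n).BddBy (c n)) → Tendsto c atTop (nhds 0) →
    TendstoInMeasure P (fun n => elemIntegral S (Hs n)) atTop 0

/-- A submartingale on the time interval `[0,1]`. -/
def SubmartingaleOn (ℱ : Filtration ℝ m0) (P : Measure Ω) (Y : ℝ → Ω → ℝ) : Prop :=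
  AdaptedOn ℱ Y ∧ (∀ t ∈ Set.Icc (0:ℝ) 1, Integrable (Y t) P) ∧
    ∀ s t : ℝ, s ∈ Set.Icc (0:ℝ) 1 → t ∈ Set.Icc (0:ℝ) 1 → s ≤ t →
      ∀ᵐ ω ∂P, Y s ω ≤ (P[Y t | ℱ s]) ω

/-- A martingale on the time interval `[0,1]`. -/
def MartingaleOn (ℱ : Filtration ℝ m0) (P : Measure Ω) (Y : ℝ → Ω → ℝ) : Prop :=
  AdaptedOn ℱ Y ∧ (∀ t ∈ Set.Icc (0:ℝ) 1, Integrable (Y t) P) ∧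
    ∀ s t : ℝ, s ∈ Set.Icc (0:ℝ) 1 → t ∈ Set.Icc (0:ℝ) 1 → s ≤ t →
      (P[Y t | ℱ s]) =ᵐ[P] Y s

/-- A local martingale on `[0,1]`: for every `ε > 0` there is a `[0,1] ∪ {∞}`-valued stopping
time `ρ` with `P(ρ = ∞) ≥ 1 - ε` such that the stopped process is a martingale. -/
def IsLocalMartingaleOn (ℱ : Filtration ℝ m0) (P : Measure Ω) (M : ℝ → Ω → ℝ) : Prop :=
  ∀ ε : ℝ, 0 < ε → ∃ ρ : Ω → WithTop ℝ, IsStoppingTimeTop ℱ ρ ∧ ValuedInUnitOrTop ρ ∧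
    1 - ENNReal.ofReal ε ≤ P {ω | ρ ω = ⊤} ∧ MartingaleOn ℱ P (stopped M ρ)

/-- All paths of the process have finite total variation on `[0,1]`. -/
def FiniteVariationPaths (A : ℝ → Ω → ℝ) : Prop :=
  ∀ ω, BoundedVariationOn (fun t => A t ω) (Set.Icc (0:ℝ) 1)

/-- `S` is a semimartingale on `[0,1]`: it is (up to indistinguishability on `[0,1]`) the sum
of a càdlàg local martingale and a càdlàg adapted process of finite variation. -/
def IsSemimartingaleOn (ℱ : Filtration ℝ m0) (P : Measure Ω) (S : ℝ → Ω → ℝ) : Prop :=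
  ∃ M A : ℝ → Ω → ℝ, Cadlag M ∧ IsLocalMartingaleOn ℱ P M ∧
    Cadlag A ∧ AdaptedOn ℱ A ∧ FiniteVariationPaths A ∧
    ∀ᵐ ω ∂P, ∀ t ∈ Set.Icc (0:ℝ) 1, S t ω = M t ω + A t ω

/-- A partition `0 = t_0 < t_1 < … < t_n = 1` of `[0,1]`. -/
structure Partition where
  n : ℕ
  t : Fin (n + 1) → ℝ
  strictMono : StrictMono t
  first : t 0 = 0
  last : t (Fin.last n) = 1

/-- The mean variation `Var(S, π) = E ∑_i |E[S_{t_{i+1}} - S_{t_i} | ℱ_{t_i}]|` of `S`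
along the partition `π`. -/
def meanVar (ℱ : Filtration ℝ m0) (P : Measure Ω) (S : ℝ → Ω → ℝ) (π : Partition) : ℝ :=
  ∑ i : Fin π.n,
    ∫ ω, |(P[fun ω => S (π.t i.succ) ω - S (π.t i.castSucc) ω | ℱ (π.t i.castSucc)]) ω| ∂P

/-- The `n`-th dyadic partition `{0, 1/2ⁿ, …, 1}` of `[0,1]`. -/
def dyadicPartition (n : ℕ) : Partition where
  n := 2 ^ n
  t := fun i => (i.val : ℝ) / 2 ^ n
  strictMono := by
    intro i j hij
    have h2 : (0:ℝ) < 2 ^ n := by positivity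
    have h : (i.val : ℝ) < (j.val : ℝ) := by exact_mod_cast hij
    exact div_lt_div_of_pos_right h h2
  first := by simp
  last := by
    have h2 : (2:ℝ) ^ n ≠ 0 := by positivity
    simp [Fin.last, h2]

/-- The Riemann sum `∑_{i=0}^{2ⁿ-1} H_{i/2ⁿ} (S_{(i+1)/2ⁿ} - S_{i/2ⁿ})`. -/
def riemannSum (S H : ℝ → Ω → ℝ) (n : ℕ) (ω : Ω) : ℝ :=
  ∑ i ∈ Finset.range (2 ^ n),
    H ((i : ℝ) / 2 ^ n) ω * (S (((i : ℝ) + 1) / 2 ^ n) ω - S ((i : ℝ) / 2 ^ n) ω)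

/-- A bounded adapted process with continuous paths on `[0,1]`. -/
def BddContAdapted (ℱ : Filtration ℝ m0) (H : ℝ → Ω → ℝ) : Prop :=
  (∃ C : ℝ, ∀ t ∈ Set.Icc (0:ℝ) 1, ∀ ω, |H t ω| ≤ C) ∧ AdaptedOn ℱ H ∧
    ∀ ω, ContinuousOn (fun t => H t ω) (Set.Icc (0:ℝ) 1)

/-- `S` is a Riemann integrator: for every bounded adapted continuous process `H`, the
Riemann sums along the dyadic partitions converge in probability. -/
def RiemannIntegrator (ℱ : Filtration ℝ m0) (P : Measure Ω) (S : ℝ → Ω → ℝ) : Prop :=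
  ∀ H : ℝ → Ω → ℝ, BddContAdapted ℱ H →
    ∃ L : Ω → ℝ, TendstoInMeasure P (fun n => riemannSum S H n) atTop L

/-- An element of `ℰ_{D_n}`: a process `∑_{i=0}^{2ⁿ-1} H^i 1_{(i/2ⁿ, (i+1)/2ⁿ]}` with `H⁰ = 0`
and `H^i` bounded and `ℱ_{(i-1)/2ⁿ}`-measurable for `1 ≤ i ≤ 2ⁿ - 1`. -/
structure DyadicIntegrand (ℱ : Filtration ℝ m0) where
  n : ℕ
  H : ℕ → Ω → ℝ
  H_zero : H 0 = fun _ => 0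
  H_bdd : ∀ i, ∃ C : ℝ, ∀ ω, |H i ω| ≤ C
  H_meas : ∀ i : ℕ, 1 ≤ i → i < 2 ^ n →
    StronglyMeasurable[ℱ (((i : ℝ) - 1) / 2 ^ n)] (H i)

/-- The elementary integral of an element of `ℰ_{D_n}` against `S`. -/
def dyadicIntegral {ℱ : Filtration ℝ m0} (S : ℝ → Ω → ℝ) (D : DyadicIntegrand ℱ) (ω : Ω) : ℝ :=
  ∑ i ∈ Finset.range (2 ^ D.n),
    D.H i ω * (S (((i : ℝ) + 1) / 2 ^ D.n) ω - S ((i : ℝ) / 2 ^ D.n) ω)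

/-- `c` is a uniform bound for an element of `ℰ_{D_n}` (hence for its sup norm). -/
def DyadicIntegrand.BddBy {ℱ : Filtration ℝ m0} (D : DyadicIntegrand ℱ) (c : ℝ) : Prop :=
  ∀ i < 2 ^ D.n, ∀ ω, |D.H i ω| ≤ c

/-- The jump `ΔS_t = S_t - S_{t-}` of the process `S` at time `t`. -/
def jump (S : ℝ → Ω → ℝ) (t : ℝ) (ω : Ω) : ℝ :=
  S t ω - Function.leftLim (fun s => S s ω) t

/-- The times `s ∈ (0, t]` at which `S` has a jump of size at least `1`. -/
def bigJumpTimes (S : ℝ → Ω → ℝ) (t : ℝ) (ω : Ω) : Set ℝ :=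
  {s : ℝ | s ∈ Set.Ioc (0:ℝ) t ∧ 1 ≤ |jump S s ω|}

/-- The sum of the big jumps: `J_t = ∑_{0 < s ≤ t} ΔS_s 1_{|ΔS_s| ≥ 1}`. -/
def bigJumpPart (S : ℝ → Ω → ℝ) (t : ℝ) (ω : Ω) : ℝ :=
  ∑ᶠ s ∈ bigJumpTimes S t ω, jump S s ω

theorem Partition.t_castSucc_le_succ (π : Partition) (i : Fin π.n) :
    π.t i.castSucc ≤ π.t i.succ :=
  (π.strictMono Fin.castSucc_lt_succ).le

theorem Partition.t_mem_Icc (π : Partition) (j : Fin (π.n + 1)) : π.t j ∈ Set.Icc (0:ℝ) 1 :=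
  ⟨π.first ▸ π.strictMono.monotone (Fin.zero_le _),
    π.last ▸ π.strictMono.monotone (Fin.le_last _)⟩

/-- The paper's `ρ+ = inf {t ∈ π : t ≥ ρ}`, with `inf ∅ = ⊤`. -/
def gridCeil {n : ℕ} (t : Fin (n + 1) → ℝ) (x : WithTop ℝ) : WithTop ℝ :=
  Finset.univ.inf fun j => if x ≤ (t j : WithTop ℝ) then (t j : WithTop ℝ) else ⊤

theorem gridCeil_le {n : ℕ} {t : Fin (n + 1) → ℝ} {x : WithTop ℝ} {j : Fin (n + 1)}
    (h : x ≤ (t j : WithTop ℝ)) : gridCeil t x ≤ t j :=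
  (Finset.inf_le (Finset.mem_univ j)).trans_eq (if_pos h)

theorem succ_le_gridCeil {n : ℕ} {t : Fin (n + 1) → ℝ} (ht : StrictMono t) {x : WithTop ℝ}
    {i : Fin n} (h : (t i.castSucc : WithTop ℝ) < x) : (t i.succ : WithTop ℝ) ≤ gridCeil t x := by
  refine Finset.le_inf fun j _ => ?_
  split_ifs with hj
  · have : i.castSucc < j := ht.lt_iff_lt.mp (WithTop.coe_lt_coe.mp (h.trans_le hj))
    exact WithTop.coe_le_coe.mpr (ht.monotone (Fin.castSucc_lt_iff_succ_le.mp this))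
  · exact le_top

theorem stopped_apply_of_le {S : ℝ → Ω → ℝ} {τ : Ω → WithTop ℝ} {t : ℝ} {ω : Ω}
    (h : (t : WithTop ℝ) ≤ τ ω) : stopped S τ t ω = S t ω := by
  rw [stopped, min_eq_left h, WithTop.untopD_coe]

theorem stopped_apply_eq_of_ge {S : ℝ → Ω → ℝ} {τ : Ω → WithTop ℝ} {s t : ℝ} {ω : Ω}
    (hs : τ ω ≤ s) (ht : τ ω ≤ t) : stopped S τ s ω = stopped S τ t ω := by
  obtain ⟨r, hr⟩ := WithTop.ne_top_iff_exists.mp (ne_top_of_le_ne_top WithTop.coe_ne_top hs)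
  rw [stopped, stopped, min_eq_right hs, min_eq_right ht, ← hr, WithTop.untopD_coe,
    WithTop.untopD_coe]

theorem stopped_gridCeil_increment (S : ℝ → Ω → ℝ) {π : Partition} {ρ τ : Ω → WithTop ℝ}
    (hτ : ∀ ω, τ ω = gridCeil π.t (ρ ω)) (i : Fin π.n) :
    (fun ω => stopped S τ (π.t i.succ) ω - stopped S τ (π.t i.castSucc) ω) =
      {ω | (π.t i.castSucc : WithTop ℝ) < ρ ω}.indicator
        fun ω => S (π.t i.succ) ω - S (π.t i.castSucc) ω := by
  funext ω
  by_cases h : (π.t i.castSucc : WithTop ℝ) < ρ ω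
  · have hsucc : (π.t i.succ : WithTop ℝ) ≤ τ ω := hτ ω ▸ succ_le_gridCeil π.strictMono h
    have hcast : (π.t i.castSucc : WithTop ℝ) ≤ π.t i.succ :=
      WithTop.coe_le_coe.mpr (π.t_castSucc_le_succ i)
    rw [stopped_apply_of_le hsucc, stopped_apply_of_le (hcast.trans hsucc)]
    simp [h]
  · have hcast : τ ω ≤ π.t i.castSucc := hτ ω ▸ gridCeil_le (not_lt.mp h)
    have hsucc : τ ω ≤ π.t i.succ :=
      hcast.trans (WithTop.coe_le_coe.mpr (π.t_castSucc_le_succ i))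
    rw [stopped_apply_eq_of_ge hsucc hcast, sub_self]
    simp [h]

theorem IsStoppingTimeTop.measurableSet_lt {ℱ : Filtration ℝ m0} {ρ : Ω → WithTop ℝ}
    (hρ : IsStoppingTimeTop ℱ ρ) (t : ℝ) : MeasurableSet[ℱ t] {ω | (t : WithTop ℝ) < ρ ω} := by
  simpa only [Set.compl_ofPred, not_le] using (hρ t).compl

theorem integral_abs_condExp_indicator {m : MeasurableSpace Ω} {μ : Measure[m0] Ω} {f : Ω → ℝ}
    {s : Set Ω} (hf : Integrable f μ) (hs : MeasurableSet[m] s) :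
    ∫ ω, |μ[s.indicator f | m] ω| ∂μ = ∫ ω, s.indicator (fun ω => |μ[f | m] ω|) ω ∂μ := by
  refine integral_congr_ae ?_
  filter_upwards [condExp_indicator hf hs] with ω hω
  by_cases hωs : ω ∈ s <;> simp [hω, hωs]

theorem meanVar_stopped_eq_general
    (ℱ : Filtration ℝ m0) (P : Measure Ω) (S : ℝ → Ω → ℝ)
    (hS_int : ∀ t ∈ Set.Icc (0:ℝ) 1, Integrable (S t) P)
    (π : Partition) (ρ : Ω → WithTop ℝ)
    (hρ : IsStoppingTimeTop ℱ ρ)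
    (ρplus : Ω → WithTop ℝ)
    (hρplus : ∀ ω, ρplus ω = Finset.univ.inf fun i : Fin (π.n + 1) =>
      if ρ ω ≤ (π.t i : WithTop ℝ) then (π.t i : WithTop ℝ) else ⊤) :
    meanVar ℱ P (stopped S ρplus) π =
      ∑ i : Fin π.n, ∫ ω,
        (if (π.t i.castSucc : WithTop ℝ) < ρ ω then
          |(P[fun ω' => S (π.t i.succ) ω' - S (π.t i.castSucc) ω' | ℱ (π.t i.castSucc)]) ω|
        else 0) ∂P := by
  unfold meanVar
  refine Finset.sum_congr rfl fun i _ => ?_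
  have hinc : Integrable (fun ω => S (π.t i.succ) ω - S (π.t i.castSucc) ω) P :=
    (hS_int _ (π.t_mem_Icc _)).sub (hS_int _ (π.t_mem_Icc _))
  rw [stopped_gridCeil_increment S hρplus,
    integral_abs_condExp_indicator hinc (hρ.measurableSet_lt (π.t i.castSucc))]
  simp only [Set.indicator_apply, Set.mem_ofPred_eq]

/-- For a bounded adapted integrable process `S`, a partition `π` and a stopping
time `ρ`, with `ρ+ := inf {t ∈ π : t ≥ ρ}`, one has
`Var(S^{ρ+}, π) = E ∑_i 1_{t_i < ρ} |E[S_{t_{i+1}} - S_{t_i} | ℱ_{t_i}]|`. -/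
theorem meanVar_stopped_eq
    (ℱ : Filtration ℝ m0) (P : Measure Ω) [IsProbabilityMeasure P]
    (hUC : UsualConditions ℱ P) (S : ℝ → Ω → ℝ)
    (hS_adapted : AdaptedOn ℱ S) (hS_bdd : ∃ C : ℝ, ∀ t ω, |S t ω| ≤ C)
    (hS_int : ∀ t ∈ Set.Icc (0:ℝ) 1, Integrable (S t) P)
    (π : Partition) (ρ : Ω → WithTop ℝ)
    (hρ : IsStoppingTimeTop ℱ ρ) (hρ_val : ValuedInUnitOrTop ρ)
    (ρplus : Ω → WithTop ℝ)
    (hρplus : ∀ ω, ρplus ω = Finset.univ.inf fun i : Fin (π.n + 1) =>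
      if ρ ω ≤ (π.t i : WithTop ℝ) then (π.t i : WithTop ℝ) else ⊤) :
    meanVar ℱ P (stopped S ρplus) π =
      ∑ i : Fin π.n, ∫ ω,
        (if (π.t i.castSucc : WithTop ℝ) < ρ ω then
          |(P[fun ω' => S (π.t i.succ) ω' - S (π.t i.castSucc) ω' | ℱ (π.t i.castSucc)]) ω|
        else 0) ∂P :=
  meanVar_stopped_eq_general ℱ P S hS_int π ρ hρ ρplus hρplus

end BD
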